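/- arXiv:1210.0047 — 2 statements merged into one kernel-verified Lean document; each statement's English description precedes it below -/
import Mathlib

section
/- Let V : S → R^3 be a W^{1,2} vector field on a surface S ⊂ R^3 with sym∇V = 0, i.e. ∂_τ V(p)·η + ∂_η V(p)·τ = 0 for a.e. p ∈ S and all τ, η ∈ T_p S. Then there exists a matrix field A ∈ L^2(S, R^{3×3}) with A(p) ∈ so(3) for a.e. p and ∂_τ V(p) = A(p)τ for a.e. p ∈ S and all τ ∈ T_p S, where so(3) denotes skew-symmetric 3×3 matrices. -/
/-!
Let `P` be the orthogonal projection onto the tangent plane at `p` and `T = DV p`. The operator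
`A = T P - P T* (1 - P)` agrees with `T` on tangent vectors, and `A + A* = P (T + T*) P`, which
vanishes because `sym ∇V = 0` says exactly that `T + T*` is zero as a form on the tangent plane.
For a unit normal `n`, `P = 1 - ⟪n, ·⟫ n` depends continuously on `n`, and `A` depends continuously
on `(P, T)` with `‖A‖ ≤ 2 ‖T‖`, so `A` inherits measurability and square integrability from `DV`.
-/

open MeasureTheory InnerProductSpace
open scoped RealInnerProductSpace

section StarRing

variable {R : Type*} [Ring R] [StarRing R]

def skewExtension (p T : R) : R := T * p - p * star T * (1 - p)

variable {p T : R}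

theorem skewExtension_mul_self (hp : IsIdempotentElem p) :
    skewExtension p T * p = T * p := by
  simp [skewExtension, sub_mul, mul_sub, mul_assoc, hp.eq]

theorem skewExtension_add_star (hp : IsSelfAdjoint p) :
    skewExtension p T + star (skewExtension p T) = p * (T + star T) * p := by
  simp only [skewExtension, star_sub, star_mul, star_star, star_one, hp.star_eq]
  noncomm_ring

theorem continuous_skewExtension [TopologicalSpace R] [IsTopologicalRing R] [ContinuousStar R] :
    Continuous fun x : R × R => skewExtension x.1 x.2 := by
  unfold skewExtension
  fun_prop

end StarRing

theorem norm_skewExtension_le {R : Type*} [NormedRing R] [StarRing R] [CStarRing R] {p T : R}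
    (hp : IsStarProjection p) : ‖skewExtension p T‖ ≤ 2 * ‖T‖ := by
  have hp_le : ‖p‖ ≤ 1 := hp.norm_le
  have hq_le : ‖1 - p‖ ≤ 1 := hp.one_sub.norm_le
  calc ‖skewExtension p T‖ ≤ ‖T‖ * ‖p‖ + ‖p‖ * ‖star T‖ * ‖1 - p‖ :=
        (norm_sub_le _ _).trans (add_le_add (norm_mul_le _ _) (norm_mul₃_le ..))
    _ ≤ ‖T‖ * 1 + 1 * ‖T‖ * 1 := by rw [norm_star]; gcongr
    _ = 2 * ‖T‖ := by ring

instance ContinuousLinearMap.instContinuousStar {𝕜 E : Type*} [RCLike 𝕜] [NormedAddCommGroup E]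
    [InnerProductSpace 𝕜 E] [CompleteSpace E] : ContinuousStar (E →L[𝕜] E) :=
  ⟨ContinuousLinearMap.adjoint.continuous⟩

section InnerProductSpace

variable {E : Type*} [NormedAddCommGroup E] [InnerProductSpace ℝ E]

theorem Submodule.starProjection_orthogonal_unit_singleton {n : E} (hn : ‖n‖ = 1) :
    (ℝ ∙ n)ᗮ.starProjection = 1 - rankOne ℝ n n := by
  rw [Submodule.starProjection_orthogonal']
  congr 1
  ext v
  simp [Submodule.starProjection_unit_singleton ℝ hn]

variable [CompleteSpace E]

theorem ContinuousLinearMap.inner_apply_eq_neg_of_star_eq_neg {A : E →L[ℝ] E}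
    (hA : star A = -A) (v w : E) : ⟪A v, w⟫ = -⟪A w, v⟫ := by
  rw [← adjoint_inner_right, ← star_eq_adjoint, hA, neg_apply, inner_neg_right, real_inner_comm]

variable {K : Submodule ℝ E} [K.HasOrthogonalProjection] {T : E →L[ℝ] E}

theorem Submodule.starProjection_mul_add_star_mul_starProjection_eq_zero
    (hT : ∀ τ ∈ K, ∀ η ∈ K, ⟪T τ, η⟫ + ⟪T η, τ⟫ = 0) :
    K.starProjection * (T + star T) * K.starProjection = 0 := by
  refine ContinuousLinearMap.ext fun v => ext_inner_right ℝ fun w => ?_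
  calc ⟪(K.starProjection * (T + star T) * K.starProjection) v, w⟫
      = ⟪T (K.starProjection v), K.starProjection w⟫ +
          ⟪T (K.starProjection w), K.starProjection v⟫ := by
        simp [Submodule.inner_starProjection_left_eq_right, ContinuousLinearMap.star_eq_adjoint,
          inner_add_left, ContinuousLinearMap.adjoint_inner_left, real_inner_comm]
    _ = ⟪(0 : E →L[ℝ] E) v, w⟫ := by
        rw [hT _ (K.starProjection_apply_mem v) _ (K.starProjection_apply_mem w)]
        simp

theorem inner_skewExtension_starProjection_eq_neg
    (hT : ∀ τ ∈ K, ∀ η ∈ K, ⟪T τ, η⟫ + ⟪T η, τ⟫ = 0) (v w : E) :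
    ⟪skewExtension K.starProjection T v, w⟫ = -⟪skewExtension K.starProjection T w, v⟫ := by
  refine ContinuousLinearMap.inner_apply_eq_neg_of_star_eq_neg ?_ v w
  rw [eq_neg_iff_add_eq_zero, add_comm, skewExtension_add_star (isSelfAdjoint_starProjection K),
    K.starProjection_mul_add_star_mul_starProjection_eq_zero hT]

theorem skewExtension_starProjection_apply_of_mem {τ : E} (hτ : τ ∈ K) :
    skewExtension K.starProjection T τ = T τ := by
  have hPτ : K.starProjection τ = τ := K.starProjection_eq_self_iff.2 hτ
  calc skewExtension K.starProjection T τ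
      = (skewExtension K.starProjection T * K.starProjection) τ := by
        rw [mul_apply_eq_comp, hPτ]
    _ = T τ := by
        rw [skewExtension_mul_self K.isIdempotentElem_starProjection, mul_apply_eq_comp, hPτ]

end InnerProductSpace

theorem infinitesimal_isometry_skew_gradient_general
    (S : Set (EuclideanSpace ℝ (Fin 3)))
    (μ : Measure (EuclideanSpace ℝ (Fin 3)))
    (hμS : μ (Sᶜ) = 0)
    (n : EuclideanSpace ℝ (Fin 3) → EuclideanSpace ℝ (Fin 3))
    (hn : ∀ p ∈ S, ‖n p‖ = 1)
    (hn_meas : AEStronglyMeasurable n μ)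
    (Tan : EuclideanSpace ℝ (Fin 3) → Submodule ℝ (EuclideanSpace ℝ (Fin 3)))
    (hTan : ∀ p ∈ S, Tan p = (Submodule.span ℝ {n p})ᗮ)
    (DV : EuclideanSpace ℝ (Fin 3) →
      EuclideanSpace ℝ (Fin 3) →L[ℝ] EuclideanSpace ℝ (Fin 3))
    (hDV_L2 : MemLp (fun p => ‖DV p‖) 2 μ)
    (hDV_meas : AEStronglyMeasurable DV μ)
    -- `sym ∇V = 0`
    (hsym : ∀ᵐ p ∂μ, ∀ τ ∈ Tan p, ∀ η ∈ Tan p, ⟪DV p τ, η⟫ + ⟪DV p η, τ⟫ = 0) :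
    ∃ A : EuclideanSpace ℝ (Fin 3) →
        EuclideanSpace ℝ (Fin 3) →L[ℝ] EuclideanSpace ℝ (Fin 3),
      MemLp (fun p => ‖A p‖) 2 μ ∧ AEStronglyMeasurable A μ ∧
      ∀ᵐ p ∂μ, (∀ v w : EuclideanSpace ℝ (Fin 3), ⟪A p v, w⟫ = -⟪A p w, v⟫) ∧
        ∀ τ ∈ Tan p, A p τ = DV p τ := by
  let P : EuclideanSpace ℝ (Fin 3) → EuclideanSpace ℝ (Fin 3) →L[ℝ] EuclideanSpace ℝ (Fin 3) :=
    fun p => 1 - rankOne ℝ (n p) (n p)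
  have hS : ∀ᵐ p ∂μ, p ∈ S := mem_ae_iff.2 hμS
  have hP : ∀ p ∈ S, P p = (ℝ ∙ n p)ᗮ.starProjection := fun p hp =>
    (Submodule.starProjection_orthogonal_unit_singleton (hn p hp)).symm
  have hP_meas : AEStronglyMeasurable P μ := by
    have hrankOne : Continuous fun v : EuclideanSpace ℝ (Fin 3) => rankOne ℝ v v :=
      (rankOne ℝ (E := EuclideanSpace ℝ (Fin 3))).continuous₂.comp
        (continuous_id.prodMk continuous_id)
    exact (continuous_const.sub hrankOne).comp_aestronglyMeasurable hn_meas
  -- `(e :)` elaborates `e` before unifying with the goal; the other order is very slow here.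
  have hA_meas : AEStronglyMeasurable (fun p => skewExtension (P p) (DV p)) μ :=
    (continuous_skewExtension.comp_aestronglyMeasurable (hP_meas.prodMk hDV_meas) :)
  refine ⟨fun p => skewExtension (P p) (DV p), ?_, hA_meas, ?_⟩
  · refine (hDV_L2.const_mul 2).of_le hA_meas.norm ?_
    filter_upwards [hS] with p hp
    rw [norm_norm, Real.norm_of_nonneg (by positivity), hP p hp]
    exact norm_skewExtension_le isStarProjection_starProjection
  · filter_upwards [hS, hsym] with p hp hsym_p
    rw [hTan p hp] at hsym_p ⊢
    simp only [hP p hp]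
    exact ⟨inner_skewExtension_starProjection_eq_neg hsym_p,
      fun τ hτ => skewExtension_starProjection_apply_of_mem hτ⟩

/-- Let `V` be a `W^{1,2}` vector field on an oriented surface
`S ⊂ ℝ³` (with unit normal `n`, tangent planes `Tan p = (ℝ n(p))^⊥` and surface
measure `μ`), whose tangential gradient `DV` satisfies `sym∇V = 0`, i.e.
`⟨∂_τ V, η⟩ + ⟨∂_η V, τ⟩ = 0` a.e.  Then there is a field `A ∈ L²` of
skew-symmetric operators (`so(3)`) with `∂_τ V(p) = A(p) τ` for a.e. `p` and all
tangent `τ`. -/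
theorem infinitesimal_isometry_skew_gradient
    (S : Set (EuclideanSpace ℝ (Fin 3)))
    (μ : Measure (EuclideanSpace ℝ (Fin 3)))
    (hμS : μ (Sᶜ) = 0)
    (n : EuclideanSpace ℝ (Fin 3) → EuclideanSpace ℝ (Fin 3))
    (hn : ∀ p ∈ S, ‖n p‖ = 1)
    (hn_meas : AEStronglyMeasurable n μ)
    (Tan : EuclideanSpace ℝ (Fin 3) → Submodule ℝ (EuclideanSpace ℝ (Fin 3)))
    (hTan : ∀ p ∈ S, Tan p = (Submodule.span ℝ {n p})ᗮ)
    (V DV' : EuclideanSpace ℝ (Fin 3) → EuclideanSpace ℝ (Fin 3))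
    (DV : EuclideanSpace ℝ (Fin 3) →
      EuclideanSpace ℝ (Fin 3) →L[ℝ] EuclideanSpace ℝ (Fin 3))
    (hV_L2 : MemLp V 2 μ)
    (hDV_L2 : MemLp (fun p => ‖DV p‖) 2 μ)
    (hDV_meas : AEStronglyMeasurable DV μ)
    -- `DV p τ` is the derivative of `V` at `p` along tangent directions `τ`
    (hderiv : ∀ᵐ p ∂μ, ∀ τ ∈ Tan p, HasLineDerivWithinAt ℝ V (DV p τ) S p τ)
    -- `sym ∇V = 0`
    (hsym : ∀ᵐ p ∂μ, ∀ τ ∈ Tan p, ∀ η ∈ Tan p, ⟪DV p τ, η⟫ + ⟪DV p η, τ⟫ = 0) :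
    ∃ A : EuclideanSpace ℝ (Fin 3) →
        EuclideanSpace ℝ (Fin 3) →L[ℝ] EuclideanSpace ℝ (Fin 3),
      MemLp (fun p => ‖A p‖) 2 μ ∧ AEStronglyMeasurable A μ ∧
      ∀ᵐ p ∂μ, (∀ v w : EuclideanSpace ℝ (Fin 3), ⟪A p v, w⟫ = -⟪A p w, v⟫) ∧
        ∀ τ ∈ Tan p, A p τ = DV p τ :=
  infinitesimal_isometry_skew_gradient_general S μ hμS n hn hn_meas Tan hTan DV hDV_L2 hDV_meas hsym
end

section
/- Let Γ ∈ C^{1,1}([0,T], R^2) be arclength parametrized with normal N = (Γ')^⊥ and curvature κ, s^± ∈ C^{0,1}([0,T]) positive, and assume the open segments [Γ(t)] = {Γ(t) + sN(t) : s ∈ (−s^-(t), s^+(t))} are pairwise disjoint for distinct t ∈ [0,T]. Then κ(t) ∈ [−1/s^-(t), 1/s^+(t)] for almost every t ∈ (0,T). -/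
/-!
Suppose `κ(a) ∉ [-1/s⁻(a), 1/s⁺(a)]` at a point `a` where `Γ'` is differentiable. Then `κ(a) ≠ 0`
and the centre of curvature `Γ(a) + κ(a)⁻¹ N(a)` lies on the open segment `[Γ(a)]`. The normal
lines at `a - r` and `a + r` meet at parameters that tend to `κ(a)⁻¹` as `r → 0`, because the
symmetric difference quotients of `Γ` and `Γ'` tend to `Γ'(a)` and `Γ''(a)`. By continuity of
`s^±`, for small `r` the meeting point lies on both open segments `[Γ(a ∓ r)]`, contradicting
their disjointness.
-/

open Filter Topology Set MeasureTheory

section TopologicalAddGroup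

variable {G : Type*} [TopologicalSpace G] [AddGroup G] [IsTopologicalAddGroup G]

theorem tendsto_add_nhdsNE_zero (a : G) : Tendsto (fun r => a + r) (𝓝[≠] 0) (𝓝 a) := by
  simpa using (tendsto_const_nhds.add tendsto_id).mono_left (nhdsWithin_le_nhds (a := (0 : G)))

theorem tendsto_sub_nhdsNE_zero (a : G) : Tendsto (fun r => a - r) (𝓝[≠] 0) (𝓝 a) := by
  simpa using (tendsto_const_nhds.sub tendsto_id).mono_left (nhdsWithin_le_nhds (a := (0 : G)))

theorem tendsto_neg_nhdsNE_zero : Tendsto (fun r : G => -r) (𝓝[≠] 0) (𝓝[≠] 0) := by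
  simpa using continuous_neg.continuousWithinAt.tendsto_nhdsWithin (x := (0 : G))
    (s := {0}ᶜ) (t := {0}ᶜ) fun _ hr => neg_ne_zero.2 hr

end TopologicalAddGroup

theorem HasDerivAt.tendsto_symmetric_slope_zero {E : Type*} [NormedAddCommGroup E]
    [NormedSpace ℝ E] {f : ℝ → E} {f' : E} {x : ℝ} (h : HasDerivAt f f' x) :
    Tendsto (fun t => (2 * t)⁻¹ • (f (x + t) - f (x - t))) (𝓝[≠] 0) (𝓝 f') := by
  have hright := h.tendsto_slope_zero
  have hlim := (hright.add (hright.comp tendsto_neg_nhdsNE_zero)).const_smul (2 : ℝ)⁻¹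
  rw [← two_smul ℝ f', smul_smul, inv_mul_cancel₀ two_ne_zero, one_smul] at hlim
  refine hlim.congr fun t => ?_
  rw [Function.comp_apply, inv_neg, neg_smul, ← sub_eq_add_neg, ← smul_sub,
    sub_sub_sub_cancel_right, ← sub_eq_add_neg, smul_smul, mul_inv]

theorem inv_mem_Ioo_of_notMem_Icc {𝕜 : Type*} [Field 𝕜] [LinearOrder 𝕜] [IsStrictOrderedRing 𝕜]
    {k m p : 𝕜} (hm : 0 < m) (hp : 0 < p)
    (hk : k ∉ Icc (-(1 / m)) (1 / p)) : k ≠ 0 ∧ k⁻¹ ∈ Ioo (-m) p := by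
  rw [mem_Icc, not_and_or, not_le, not_le] at hk
  rcases hk with hk | hk
  · have hk0 : k < 0 := hk.trans (neg_lt_zero.2 (by positivity))
    refine ⟨hk0.ne, ?_, (inv_lt_zero.2 hk0).trans hp⟩
    simpa using (inv_lt_inv_of_neg (neg_lt_zero.2 (by positivity)) hk0).2 hk
  · have hk0 : 0 < k := lt_trans (by positivity) hk
    exact ⟨hk0.ne', lt_trans (neg_lt_zero.2 hm) (inv_pos.2 hk0), by
      rwa [inv_lt_comm₀ hk0 hp, ← one_div]⟩

namespace Plane

def dot (u v : ℝ × ℝ) : ℝ := u.1 * v.1 + u.2 * v.2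

def cross (u v : ℝ × ℝ) : ℝ := u.1 * v.2 - u.2 * v.1

def rot (u : ℝ × ℝ) : ℝ × ℝ := (-u.2, u.1)

theorem dot_smul_left (c : ℝ) (u v : ℝ × ℝ) : dot (c • u) v = c * dot u v := by
  simp only [dot, Prod.smul_fst, Prod.smul_snd, smul_eq_mul]; ring

theorem cross_smul_sub_right (c : ℝ) (u v : ℝ × ℝ) : cross u (c • (v - u)) = c * cross u v := by
  simp only [cross, Prod.smul_fst, Prod.smul_snd, Prod.fst_sub, Prod.snd_sub, smul_eq_mul]; ring

section Limits

variable {α : Type*} {l : Filter α} {f g : α → ℝ × ℝ} {u v : ℝ × ℝ}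

theorem tendsto_dot (hf : Tendsto f l (𝓝 u)) (hg : Tendsto g l (𝓝 v)) :
    Tendsto (fun x => dot (f x) (g x)) l (𝓝 (dot u v)) :=
  (hf.fst_nhds.mul hg.fst_nhds).add (hf.snd_nhds.mul hg.snd_nhds)

theorem tendsto_cross (hf : Tendsto f l (𝓝 u)) (hg : Tendsto g l (𝓝 v)) :
    Tendsto (fun x => cross (f x) (g x)) l (𝓝 (cross u v)) :=
  (hf.fst_nhds.mul hg.snd_nhds).sub (hf.snd_nhds.mul hg.fst_nhds)

end Limits

/-- The parameter `s` at which the line `p₁ + s • rot u₁` meets the line through `p₂` with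
direction `rot u₂` (Cramer's rule). -/
noncomputable def normalParam (p₁ u₁ p₂ u₂ : ℝ × ℝ) : ℝ := dot (p₂ - p₁) u₂ / cross u₁ u₂

theorem add_normalParam_smul_rot_comm {p₁ u₁ p₂ u₂ : ℝ × ℝ} (h : cross u₁ u₂ ≠ 0) :
    p₁ + normalParam p₁ u₁ p₂ u₂ • rot u₁ = p₂ + normalParam p₂ u₂ p₁ u₁ • rot u₂ := by
  have hswap : cross u₂ u₁ = -cross u₁ u₂ := by simp only [cross]; ring
  rw [normalParam, normalParam, hswap, div_neg, neg_smul, ← sub_eq_add_neg, eq_sub_iff_add_eq,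
    add_assoc, ← eq_sub_iff_add_eq', div_eq_inv_mul, div_eq_inv_mul, mul_smul, mul_smul,
    ← smul_add, inv_smul_eq_iff₀ h]
  ext <;> simp only [dot, cross, rot, Prod.fst_add, Prod.snd_add, Prod.smul_fst, Prod.smul_snd,
    Prod.fst_sub, Prod.snd_sub, smul_eq_mul] <;> ring

end Plane

open Plane

section NormalLines

variable {Γ Γ' : ℝ → ℝ × ℝ} {γ : ℝ × ℝ} {a : ℝ}

theorem tendsto_cross_div_two_mul (hΓ' : HasDerivAt Γ' γ a) :
    Tendsto (fun r => cross (Γ' (a - r)) (Γ' (a + r)) / (2 * r)) (𝓝[≠] 0)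
      (𝓝 (cross (Γ' a) γ)) := by
  have hcross : ∀ r, cross (Γ' (a - r)) (Γ' (a + r)) / (2 * r) =
      cross (Γ' (a - r)) ((2 * r)⁻¹ • (Γ' (a + r) - Γ' (a - r))) := fun r => by
    rw [cross_smul_sub_right, div_eq_inv_mul]
  simpa only [hcross, Function.comp_def] using tendsto_cross
    (hΓ'.continuousAt.tendsto.comp (tendsto_sub_nhdsNE_zero a)) hΓ'.tendsto_symmetric_slope_zero

theorem tendsto_normalParam (hΓ : HasDerivAt Γ (Γ' a) a) (hΓ' : HasDerivAt Γ' γ a)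
    (hunit : dot (Γ' a) (Γ' a) = 1) (hk : cross (Γ' a) γ ≠ 0) :
    Tendsto (fun r => normalParam (Γ (a - r)) (Γ' (a - r)) (Γ (a + r)) (Γ' (a + r))) (𝓝[≠] 0)
      (𝓝 (cross (Γ' a) γ)⁻¹) := by
  have hlim := (tendsto_dot hΓ.tendsto_symmetric_slope_zero
    (hΓ'.continuousAt.tendsto.comp (tendsto_add_nhdsNE_zero a))).div
      (tendsto_cross_div_two_mul hΓ') hk
  rw [hunit, one_div] at hlim
  refine hlim.congr' (eventually_nhdsWithin_of_forall fun r (hr : r ≠ 0) => ?_)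
  simp only [Pi.div_apply, Function.comp_apply, normalParam, dot_smul_left]
  field_simp

def normalSegment (Γ Γ' : ℝ → ℝ × ℝ) (sm sp : ℝ → ℝ) (t : ℝ) : Set (ℝ × ℝ) :=
  (fun s => Γ t + s • rot (Γ' t)) '' Ioo (-sm t) (sp t)

theorem eventually_normalSegment_inter_nonempty {sm sp : ℝ → ℝ}
    (hΓ : HasDerivAt Γ (Γ' a) a) (hΓ' : HasDerivAt Γ' γ a) (hunit : dot (Γ' a) (Γ' a) = 1)
    (hsm : ContinuousAt sm a) (hsp : ContinuousAt sp a) (hk : cross (Γ' a) γ ≠ 0)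
    (hfocal : (cross (Γ' a) γ)⁻¹ ∈ Ioo (-sm a) (sp a)) :
    ∀ᶠ r in 𝓝[≠] 0,
      (normalSegment Γ Γ' sm sp (a - r) ∩ normalSegment Γ Γ' sm sp (a + r)).Nonempty := by
  have hmem : ∀ᶠ r in 𝓝[≠] 0, normalParam (Γ (a - r)) (Γ' (a - r)) (Γ (a + r)) (Γ' (a + r)) ∈
      Ioo (-sm (a - r)) (sp (a - r)) := by
    have hlim := tendsto_normalParam hΓ hΓ' hunit hk
    exact ((hsm.tendsto.comp (tendsto_sub_nhdsNE_zero a)).neg.eventually_lt hlim hfocal.1).and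
      (hlim.eventually_lt (hsp.tendsto.comp (tendsto_sub_nhdsNE_zero a)) hfocal.2)
  have hmem' : ∀ᶠ r in 𝓝[≠] 0, normalParam (Γ (a + r)) (Γ' (a + r)) (Γ (a - r)) (Γ' (a - r)) ∈
      Ioo (-sm (a + r)) (sp (a + r)) := by
    simpa only [sub_neg_eq_add, ← sub_eq_add_neg] using tendsto_neg_nhdsNE_zero.eventually hmem
  have hcross : ∀ᶠ r in 𝓝[≠] 0, cross (Γ' (a - r)) (Γ' (a + r)) ≠ 0 := by
    filter_upwards [(tendsto_cross_div_two_mul hΓ').eventually_ne hk] with r hr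
    contrapose! hr
    rw [hr, zero_div]
  filter_upwards [hmem, hmem', hcross] with r h₁ h₂ hr
  exact ⟨_, ⟨_, h₁, rfl⟩, ⟨_, h₂, (add_normalParam_smul_rot_comm hr).symm⟩⟩

end NormalLines

theorem curvature_bounds_from_disjoint_rulings_general
    (T : ℝ)
    (Γ Γ' Γ'' : ℝ → ℝ × ℝ)
    (hΓ' : ∀ t ∈ Set.Icc 0 T, HasDerivAt Γ (Γ' t) t)
    (hΓ'' : ∀ᵐ t ∂(volume.restrict (Set.Ioo 0 T)), HasDerivAt Γ' (Γ'' t) t)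
    (harc : ∀ t ∈ Set.Icc 0 T, (Γ' t).1 ^ 2 + (Γ' t).2 ^ 2 = 1)
    (N : ℝ → ℝ × ℝ) (hN : ∀ t, N t = (-(Γ' t).2, (Γ' t).1))
    (κ : ℝ → ℝ) (hκ : ∀ t, κ t = (Γ'' t).1 * (N t).1 + (Γ'' t).2 * (N t).2)
    (sm sp : ℝ → ℝ)
    (hsm : ∀ t ∈ Set.Icc 0 T, 0 < sm t) (hsp : ∀ t ∈ Set.Icc 0 T, 0 < sp t)
    (hsmLip : ∃ K, LipschitzOnWith K sm (Set.Icc 0 T))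
    (hspLip : ∃ K, LipschitzOnWith K sp (Set.Icc 0 T))
    (seg : ℝ → Set (ℝ × ℝ))
    (hseg : ∀ t, seg t = (fun s => Γ t + s • N t) '' Set.Ioo (-(sm t)) (sp t))
    (hdisj : ∀ t₁ ∈ Set.Icc 0 T, ∀ t₂ ∈ Set.Icc 0 T, t₁ ≠ t₂ → seg t₁ ∩ seg t₂ = ∅) :
    ∀ᵐ t ∂(volume.restrict (Set.Ioo 0 T)), κ t ∈ Set.Icc (-(1 / sm t)) (1 / sp t) := by
  have hseg' : ∀ t, seg t = normalSegment Γ Γ' sm sp t := fun t => by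
    simp only [hseg, hN, normalSegment, rot]
  filter_upwards [hΓ'', ae_restrict_mem measurableSet_Ioo] with a hΓ''a ha
  have haIcc : a ∈ Icc 0 T := Ioo_subset_Icc_self ha
  have hnhds : Icc 0 T ∈ 𝓝 a := Icc_mem_nhds ha.1 ha.2
  have hκa : κ a = cross (Γ' a) (Γ'' a) := by rw [hκ, hN, cross]; ring
  have hunit : dot (Γ' a) (Γ' a) = 1 := by rw [dot, ← harc a haIcc]; ring
  have hcont : ∀ f : ℝ → ℝ, (∃ K, LipschitzOnWith K f (Icc 0 T)) → ContinuousAt f a :=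
    fun f ⟨_, hf⟩ => hf.continuousOn.continuousAt hnhds
  by_contra hout
  obtain ⟨hk, hfocal⟩ := inv_mem_Ioo_of_notMem_Icc (hsm a haIcc) (hsp a haIcc) hout
  rw [hκa] at hk hfocal
  have hnear : ∀ᶠ r in 𝓝[≠] 0, a - r ∈ Icc 0 T ∧ a + r ∈ Icc 0 T :=
    ((tendsto_sub_nhdsNE_zero a).eventually hnhds).and
      ((tendsto_add_nhdsNE_zero a).eventually hnhds)
  have hmeet := eventually_normalSegment_inter_nonempty (hΓ' a haIcc) hΓ''a hunit
    (hcont sm hsmLip) (hcont sp hspLip) hk hfocal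
  obtain ⟨r, hr, ⟨hr₁, hr₂⟩, hmeet⟩ := (eventually_mem_nhdsWithin.and (hnear.and hmeet)).exists
  have hne : a - r ≠ a + r := fun h => hr (show r = 0 by linarith)
  rw [← hseg', ← hseg', hdisj _ hr₁ _ hr₂ hne] at hmeet
  exact not_nonempty_empty hmeet

/-- Let `Γ ∈ C^{1,1}([0,T], ℝ²)` be arclength parametrized with
normal `N = (Γ')^⊥` and curvature `κ`, let `s^± ∈ C^{0,1}([0,T])` be positive,
and assume the open normal segments `[Γ(t)] = {Γ(t) + sN(t) : s ∈ (−s⁻(t), s⁺(t))}`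
are pairwise disjoint for distinct `t ∈ [0,T]`.  Then
`κ(t) ∈ [−1/s⁻(t), 1/s⁺(t)]` for a.e. `t ∈ (0,T)`. -/
theorem curvature_bounds_from_disjoint_rulings
    (T : ℝ) (hT : 0 < T)
    (Γ Γ' Γ'' : ℝ → ℝ × ℝ)
    (hΓ' : ∀ t ∈ Set.Icc 0 T, HasDerivAt Γ (Γ' t) t)
    (hΓ'lip : ∃ K, LipschitzOnWith K Γ' (Set.Icc 0 T))
    (hΓ'' : ∀ᵐ t ∂(volume.restrict (Set.Ioo 0 T)), HasDerivAt Γ' (Γ'' t) t)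
    (harc : ∀ t ∈ Set.Icc 0 T, (Γ' t).1 ^ 2 + (Γ' t).2 ^ 2 = 1)
    (N : ℝ → ℝ × ℝ) (hN : ∀ t, N t = (-(Γ' t).2, (Γ' t).1))
    (κ : ℝ → ℝ) (hκ : ∀ t, κ t = (Γ'' t).1 * (N t).1 + (Γ'' t).2 * (N t).2)
    (sm sp : ℝ → ℝ)
    (hsm : ∀ t ∈ Set.Icc 0 T, 0 < sm t) (hsp : ∀ t ∈ Set.Icc 0 T, 0 < sp t)
    (hsmLip : ∃ K, LipschitzOnWith K sm (Set.Icc 0 T))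
    (hspLip : ∃ K, LipschitzOnWith K sp (Set.Icc 0 T))
    (seg : ℝ → Set (ℝ × ℝ))
    (hseg : ∀ t, seg t = (fun s => Γ t + s • N t) '' Set.Ioo (-(sm t)) (sp t))
    (hdisj : ∀ t₁ ∈ Set.Icc 0 T, ∀ t₂ ∈ Set.Icc 0 T, t₁ ≠ t₂ → seg t₁ ∩ seg t₂ = ∅) :
    ∀ᵐ t ∂(volume.restrict (Set.Ioo 0 T)), κ t ∈ Set.Icc (-(1 / sm t)) (1 / sp t) :=
  curvature_bounds_from_disjoint_rulings_general T Γ Γ' Γ'' hΓ' hΓ'' harc N hN κ hκ sm sp hsm hsp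
    hsmLip hspLip seg hseg hdisj
end
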